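/- If f ∈ L^1(R), α is not an integer multiple of π, and the FRFT F_α f is an odd function, then for all 0 < ε < N, |∫_ε^N (F_α f)(x) x^{−1} e^{−πix² cot α} dx| ≤ 4 |A_α| ‖f‖_{L^1}. -/

import Mathlib

/-!
Multiplying `F_α f (x)` by the conjugate chirp `exp (-π i x² cot α)` leaves `A_α` times the
Fourier transform of `g t = exp (π i t² cot α) f t` at `x csc α`. The chirp is even, so oddness
of `F_α f` makes this Fourier transform odd, and averaging it at `±x csc α` replaces the
exponential by `-i sin (2π t x csc α)`. After dividing by `x` and exchanging the integrals
(Fubini), the inner integral `∫_ε^N sin (γ x) / x dx` is bounded by `4` uniformly in `γ`,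
and `‖g‖₁ = ‖f‖₁`.
-/

open MeasureTheory Complex Real Filter

noncomputable def Aa (α : ℝ) : ℂ := (1 - Complex.I * (Real.cot α : ℂ)) ^ ((1 : ℂ)/2)

noncomputable def frftKernel (α : ℝ) (x t : ℝ) : ℂ :=
  Aa α * Complex.exp (2 * Real.pi * Complex.I *
    (((t : ℂ)^2/2) * (Real.cot α : ℂ) - (x : ℂ) * (t : ℂ) * ((Real.sin α : ℂ))⁻¹
      + ((x : ℂ)^2/2) * (Real.cot α : ℂ)))

noncomputable def frft (α : ℝ) (f : ℝ → ℂ) (x : ℝ) : ℂ :=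
  ∫ t : ℝ, frftKernel α x t * f t

open FourierTransform

namespace Real

lemma intervalIntegrable_sin_div (a b : ℝ) :
    IntervalIntegrable (fun x => sin x / x) volume a b :=
  (intervalIntegrable_const (c := (1 : ℝ))).mono_fun
    (by fun_prop : Measurable fun x : ℝ => sin x / x).aestronglyMeasurable
    (ae_of_all _ fun x => by
      change ‖sin x / x‖ ≤ ‖(1 : ℝ)‖
      rw [norm_div, norm_one]
      exact div_le_one_of_le₀ abs_sin_le_abs (norm_nonneg x))

lemma intervalIntegrable_inv_sq {a b : ℝ} (ha : 0 < a) (hb : 0 < b) :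
    IntervalIntegrable (fun x : ℝ => (x ^ 2)⁻¹) volume a b :=
  (continuousOn_id.pow 2 |>.inv₀ fun _ hx =>
    pow_ne_zero 2 ((lt_min ha hb).trans_le hx.1).ne').intervalIntegrable

lemma integral_inv_sq {a b : ℝ} (ha : 0 < a) (hb : 0 < b) :
    ∫ x in a..b, (x ^ 2)⁻¹ = a⁻¹ - b⁻¹ := by
  rw [intervalIntegral.integral_eq_sub_of_hasDerivAt (f := fun x => -x⁻¹)
    (fun x hx => (hasDerivAt_inv ((lt_min ha hb).trans_le hx.1).ne').neg.congr_deriv (neg_neg _))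
    (intervalIntegrable_inv_sq ha hb)]
  ring

lemma abs_integral_sin_div_le_sub {a b : ℝ} (hab : a ≤ b) :
    |∫ x in a..b, sin x / x| ≤ b - a := by
  have h := intervalIntegral.norm_integral_le_of_norm_le_const (a := a) (b := b) (C := 1)
    (f := fun x => sin x / x) fun x _ => by
      rw [norm_div]
      exact div_le_one_of_le₀ abs_sin_le_abs (norm_nonneg x)
  rwa [one_mul, abs_of_nonneg (sub_nonneg.2 hab)] at h

lemma integral_sin_div_eq {a b : ℝ} (ha : 0 < a) (hb : 0 < b) :
    ∫ x in a..b, sin x / x = cos a / a - cos b / b - ∫ x in a..b, cos x * (x ^ 2)⁻¹ := by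
  have hcos : IntervalIntegrable (fun x => cos x * (x ^ 2)⁻¹) volume a b :=
    (intervalIntegrable_inv_sq ha hb).continuousOn_mul continuous_cos.continuousOn
  have hderiv : ∀ x ∈ Set.uIcc a b,
      HasDerivAt (fun x => -cos x / x) (sin x / x + cos x * (x ^ 2)⁻¹) x := fun x hx => by
    have hx : x ≠ 0 := ((lt_min ha hb).trans_le hx.1).ne'
    exact ((hasDerivAt_cos x).neg.div (hasDerivAt_id' x) hx).congr_deriv
      (by rw [Pi.neg_apply]; field_simp; ring)
  rw [eq_sub_iff_add_eq, ← intervalIntegral.integral_add (intervalIntegrable_sin_div a b) hcos,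
    intervalIntegral.integral_eq_sub_of_hasDerivAt hderiv
      ((intervalIntegrable_sin_div a b).add hcos)]
  ring

lemma abs_integral_sin_div_le_two_div {a b : ℝ} (ha : 0 < a) (hab : a ≤ b) :
    |∫ x in a..b, sin x / x| ≤ 2 / a := by
  have hb : 0 < b := ha.trans_le hab
  have hcos : |∫ x in a..b, cos x * (x ^ 2)⁻¹| ≤ a⁻¹ - b⁻¹ := by
    rw [← integral_inv_sq ha hb]
    refine intervalIntegral.norm_integral_le_of_norm_le (f := fun x => cos x * (x ^ 2)⁻¹) hab
      (ae_of_all _ fun x _ => ?_) (intervalIntegrable_inv_sq ha hb)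
    rw [norm_mul, norm_inv, norm_pow, Real.norm_eq_abs, Real.norm_eq_abs, sq_abs]
    exact mul_le_of_le_one_left (by positivity) (abs_cos_le_one x)
  have hboundary : ∀ c, 0 < c → |cos c / c| ≤ c⁻¹ := fun c hc => by
    rw [abs_div, abs_of_pos hc, div_eq_mul_inv]
    exact mul_le_of_le_one_left (by positivity) (abs_cos_le_one c)
  rw [integral_sin_div_eq ha hb]
  calc _ ≤ |cos a / a| + |cos b / b| + |∫ x in a..b, cos x * (x ^ 2)⁻¹| :=
        (abs_sub _ _).trans (add_le_add_left (abs_sub _ _) _)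
    _ ≤ 2 / a := by linarith [hboundary a ha, hboundary b hb, (by ring : 2 / a = a⁻¹ + a⁻¹)]

lemma abs_integral_sin_div_le_four {a b : ℝ} (ha : 0 < a) (hab : a ≤ b) :
    |∫ x in a..b, sin x / x| ≤ 4 := by
  rcases le_total b 2 with hb | hb
  · linarith [abs_integral_sin_div_le_sub hab]
  rcases le_total 2 a with ha2 | ha2
  · linarith [abs_integral_sin_div_le_two_div ha hab, (div_le_one ha).2 ha2]
  rw [← intervalIntegral.integral_add_adjacent_intervals (intervalIntegrable_sin_div a 2)
    (intervalIntegrable_sin_div 2 b)]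
  have h₁ := abs_integral_sin_div_le_sub ha2
  have h₂ := abs_integral_sin_div_le_two_div two_pos hb
  linarith [abs_add_le (∫ x in a..2, sin x / x) (∫ x in (2 : ℝ)..b, sin x / x)]

lemma abs_integral_sin_mul_div_le_four (γ : ℝ) {a b : ℝ} (ha : 0 < a) (hab : a ≤ b) :
    |∫ x in a..b, sin (γ * x) / x| ≤ 4 := by
  wlog hγ : 0 ≤ γ generalizing γ
  · simpa [neg_mul, sin_neg, neg_div] using this (-γ) (by linarith)
  rcases hγ.eq_or_lt with rfl | hγ
  · simp
  have hscale : ∀ x, sin (γ * x) / x = γ * (sin (γ * x) / (γ * x)) := fun x => by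
    rw [mul_div_assoc', mul_div_mul_left _ _ hγ.ne']
  simp_rw [hscale, intervalIntegral.integral_const_mul,
    intervalIntegral.integral_comp_mul_left (fun y => sin y / y) hγ.ne', smul_eq_mul,
    mul_inv_cancel_left₀ hγ.ne']
  exact abs_integral_sin_div_le_four (mul_pos hγ ha) (mul_le_mul_of_nonneg_left hab hγ.le)

end Real

lemma norm_integral_integral_sin_mul_div_le {g : ℝ → ℂ} (hg : Integrable g) (γ : ℝ) {ε N : ℝ}
    (hε : 0 < ε) (hεN : ε ≤ N) :
    ‖∫ x in ε..N, ∫ t, ((Real.sin (γ * t * x) / x : ℝ) : ℂ) * g t‖ ≤ 4 * ∫ t, ‖g t‖ := by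
  set K : ℝ → ℝ → ℂ := fun x t => ((Real.sin (γ * t * x) / x : ℝ) : ℂ) * g t
  have hK : Integrable (Function.uncurry K) ((volume.restrict (Set.Ioc ε N)).prod volume) := by
    refine Integrable.mono'
      ((integrableOn_const (C := 1 / ε) measure_Ioc_lt_top.ne).mul_prod hg.norm) ?_ ?_
    · exact ((by fun_prop : Measurable fun p : ℝ × ℝ =>
        ((Real.sin (γ * p.2 * p.1) / p.1 : ℝ) : ℂ)).aestronglyMeasurable).mul
        (hg.1.comp_quasiMeasurePreserving Measure.quasiMeasurePreserving_snd)
    · rw [Measure.restrict_prod_eq_prod_univ,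
        ae_restrict_iff' (measurableSet_Ioc.prod MeasurableSet.univ)]
      refine ae_of_all _ fun p hp => ?_
      have hx : ε ≤ p.1 := hp.1.1.le
      rw [Function.uncurry_apply_pair, norm_mul, Complex.norm_real, norm_div, Real.norm_eq_abs,
        Real.norm_of_nonneg (hε.trans_le hx).le]
      exact mul_le_mul_of_nonneg_right (div_le_div₀ zero_le_one (Real.abs_sin_le_one _) hε hx)
        (norm_nonneg _)
  have hinner : ∀ t, ∫ x in Set.Ioc ε N, K x t
      = ((∫ x in ε..N, Real.sin (γ * t * x) / x : ℝ) : ℂ) * g t := fun t => by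
    rw [integral_mul_const, integral_complex_ofReal, intervalIntegral.integral_of_le hεN]
  rw [intervalIntegral.integral_of_le hεN, integral_integral_swap hK, ← integral_const_mul]
  simp_rw [hinner]
  refine norm_integral_le_of_norm_le (hg.norm.const_mul 4) (ae_of_all _ fun t => ?_)
  rw [norm_mul, Complex.norm_real, Real.norm_eq_abs]
  gcongr
  exact Real.abs_integral_sin_mul_div_le_four _ hε hεN

lemma integrable_exp_ofReal_mul_I_mul {g : ℝ → ℂ} (hg : Integrable g) {φ : ℝ → ℝ}
    (hφ : Continuous φ) : Integrable fun t => cexp (φ t * I) * g t :=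
  hg.bdd_mul (c := 1) (by fun_prop) (ae_of_all _ fun t => (norm_exp_ofReal_mul_I _).le)

lemma fourier_sub_fourier_neg {g : ℝ → ℂ} (hg : Integrable g) (w : ℝ) :
    𝓕 g w - 𝓕 g (-w) = -2 * I * ∫ t, (Real.sin (2 * π * t * w) : ℂ) * g t := by
  simp_rw [Real.fourier_real_eq_integral_exp_smul, smul_eq_mul]
  rw [← integral_sub (integrable_exp_ofReal_mul_I_mul hg (by fun_prop))
    (integrable_exp_ofReal_mul_I_mul hg (by fun_prop)), ← integral_const_mul]
  congr 1 with t
  have hθ : ((-2 * π * t * w : ℝ) : ℂ) = -(2 * π * t * w : ℂ) := by push_cast; ring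
  have hθ' : ((-2 * π * t * -w : ℝ) : ℂ) = (2 * π * t * w : ℂ) := by push_cast; ring
  rw [hθ, hθ', ofReal_sin]
  push_cast
  linear_combination (I * g t) * Complex.two_sin (2 * π * t * w)
    + (cexp (-(2 * π * t * w) * I) - cexp (2 * π * t * w * I)) * g t * I_sq

noncomputable def chirp (α t : ℝ) : ℂ := cexp (↑(π * t ^ 2 * Real.cot α) * I)

lemma integrable_chirp_mul {f : ℝ → ℂ} (hf : Integrable f) (α : ℝ) :
    Integrable fun t => chirp α t * f t :=
  integrable_exp_ofReal_mul_I_mul hf (by fun_prop)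

lemma frft_mul_exp_eq_fourier (α : ℝ) (f : ℝ → ℂ) (x : ℝ) :
    frft α f x * cexp (-(π : ℂ) * I * (x : ℂ) ^ 2 * (Real.cot α : ℂ)) =
      Aa α * 𝓕 (fun t => chirp α t * f t) (x * (Real.sin α)⁻¹) := by
  rw [frft, Real.fourier_real_eq_integral_exp_smul, ← integral_mul_const, ← integral_const_mul]
  congr 1 with t
  have hexp : ∀ a b c d : ℂ, a * cexp b * c * cexp d = a * (cexp (b + d) * c) := fun a b c d => by
    rw [Complex.exp_add]; ring
  rw [frftKernel, chirp, smul_eq_mul, hexp, ← mul_assoc (cexp _), ← Complex.exp_add]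
  congr 3
  push_cast
  ring

lemma frft_div_mul_exp_eq_integral_sin {f : ℝ → ℂ} (hf : Integrable f) {α x : ℝ}
    (hodd : frft α f (-x) = -frft α f x) :
    frft α f x / x * cexp (-(π : ℂ) * I * (x : ℂ) ^ 2 * (Real.cot α : ℂ)) =
      -I * Aa α * ∫ t, ((Real.sin (2 * π * (Real.sin α)⁻¹ * t * x) / x : ℝ) : ℂ) *
        (chirp α t * f t) := by
  have hx := frft_mul_exp_eq_fourier α f x
  have hnx := frft_mul_exp_eq_fourier α f (-x)
  rw [hodd, ofReal_neg, neg_sq, neg_mul x] at hnx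
  have hsine := fourier_sub_fourier_neg (integrable_chirp_mul hf α) (x * (Real.sin α)⁻¹)
  have hFE : frft α f x * cexp (-(π : ℂ) * I * (x : ℂ) ^ 2 * (Real.cot α : ℂ)) =
      -I * Aa α * ∫ t, (Real.sin (2 * π * t * (x * (Real.sin α)⁻¹)) : ℂ) * (chirp α t * f t) := by
    linear_combination (hx - hnx) / 2 + Aa α / 2 * hsine
  have harg : ∀ t, 2 * π * (Real.sin α)⁻¹ * t * x = 2 * π * t * (x * (Real.sin α)⁻¹) :=
    fun t => by ring
  simp_rw [harg, ofReal_div, div_mul_eq_mul_div, integral_div, hFE]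
  ring

theorem frft_odd_truncated_bound_general (f : ℝ → ℂ) (hf : Integrable f) (α : ℝ)
    (hodd : ∀ x : ℝ, frft α f (-x) = - frft α f x) :
    ∀ ε N : ℝ, 0 < ε → ε < N →
      ‖∫ x in ε..N, frft α f x / (x : ℂ) *
          Complex.exp (-(Real.pi : ℂ) * Complex.I * (x : ℂ)^2 * (Real.cot α : ℂ))‖ ≤
        4 * ‖Aa α‖ * ∫ t : ℝ, ‖f t‖ := by
  intro ε N hε hεN
  simp_rw [frft_div_mul_exp_eq_integral_sin hf (hodd _), intervalIntegral.integral_const_mul,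
    norm_mul, norm_neg, norm_I, one_mul]
  calc _ ≤ ‖Aa α‖ * (4 * ∫ t, ‖chirp α t * f t‖) := by
        gcongr
        exact norm_integral_integral_sin_mul_div_le (integrable_chirp_mul hf α) _ hε hεN.le
    _ = 4 * ‖Aa α‖ * ∫ t, ‖f t‖ := by
        simp_rw [norm_mul, chirp, norm_exp_ofReal_mul_I, one_mul]
        ring

theorem frft_odd_truncated_bound (f : ℝ → ℂ) (hf : Integrable f) (α : ℝ)
    (hα : ∀ n : ℤ, α ≠ n * Real.pi)
    (hodd : ∀ x : ℝ, frft α f (-x) = - frft α f x) :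
    ∀ ε N : ℝ, 0 < ε → ε < N →
      ‖∫ x in ε..N, frft α f x / (x : ℂ) *
          Complex.exp (-(Real.pi : ℂ) * Complex.I * (x : ℂ)^2 * (Real.cot α : ℂ))‖ ≤
        4 * ‖Aa α‖ * ∫ t : ℝ, ‖f t‖ :=
  frft_odd_truncated_bound_general f hf α hodd
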